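/- arXiv:2103.05414 — 5 statements merged into one kernel-verified Lean document; each statement's English description precedes it below -/
import Mathlib

section
/- Let φ : W → V be a linear map between vector spaces. Define GL(φ)₁ = {A ∈ Hom(V,W) : (I + Aφ, I + φA) ∈ GL(W) × GL(V)} with operation A₁ ⊙ A₂ := A₁ + A₂ + A₁ ∘ φ ∘ A₂. Then (GL(φ)₁, ⊙) is a group with identity the zero map, and the inverse of A is −A ∘ (I + φ ∘ A)⁻¹ = −(I + A ∘ φ)⁻¹ ∘ A. -/
open LinearMap

variable {K W V : Type} [Field K] [AddCommGroup W] [AddCommGroup V]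
  [Module K W] [Module K V]

/-- Membership in the Whitehead group `GL(φ)₁`. -/
def glOne1Mem (φ : W →ₗ[K] V) (A : V →ₗ[K] W) : Prop :=
  IsUnit ((1 : Module.End K W) + A ∘ₗ φ) ∧ IsUnit ((1 : Module.End K V) + φ ∘ₗ A)

/-- The group operation `A₁ ⊙ A₂ = A₁ + A₂ + A₁ ∘ φ ∘ A₂`. -/
def glMul (φ : W →ₗ[K] V) (A₁ A₂ : V →ₗ[K] W) : V →ₗ[K] W :=
  A₁ + A₂ + A₁ ∘ₗ φ ∘ₗ A₂

/-- The candidate inverse `-A ∘ (I + φ∘A)⁻¹`. -/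
noncomputable def glInv (φ : W →ₗ[K] V) (A : V →ₗ[K] W) : V →ₗ[K] W :=
  -(A ∘ₗ Ring.inverse ((1 : Module.End K V) + φ ∘ₗ A))

/-! `A ↦ 1 + A φ` and `A ↦ 1 + φ A` turn `⊙` into composition, so closure under `⊙` and
the two-sided inverse are inherited from `GL(W)` and `GL(V)`. The two formulas for the inverse
agree by the push-through identity `(1 + A φ) A = A (1 + φ A)`. -/

theorem LinearMap.comp_ringInverse_eq_ringInverse_comp {R M N : Type*} [Semiring R]
    [AddCommMonoid M] [AddCommMonoid N] [Module R M] [Module R N]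
    {u : Module.End R M} {v : Module.End R N} (hu : IsUnit u) (hv : IsUnit v)
    {f : M →ₗ[R] N} (h : v ∘ₗ f = f ∘ₗ u) :
    f ∘ₗ Ring.inverse u = Ring.inverse v ∘ₗ f :=
  calc f ∘ₗ Ring.inverse u = (Ring.inverse v * v) ∘ₗ f ∘ₗ Ring.inverse u := by
        rw [Ring.inverse_mul_cancel v hv, Module.End.one_eq_id, id_comp]
    _ = Ring.inverse v ∘ₗ f ∘ₗ (u * Ring.inverse u) := by
        simp only [Module.End.mul_eq_comp, comp_assoc]
        rw [← comp_assoc _ u f, ← h, comp_assoc]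
    _ = Ring.inverse v ∘ₗ f := by
        rw [Ring.mul_inverse_cancel u hu, Module.End.one_eq_id, comp_id]

section GLOne

variable (φ : W →ₗ[K] V) {A B : V →ₗ[K] W}

theorem glMul_eq_add_comp (A B : V →ₗ[K] W) :
    glMul φ A B = A + ((1 : Module.End K W) + A ∘ₗ φ) ∘ₗ B := by
  simp only [glMul, add_comp, Module.End.one_eq_id, id_comp, comp_assoc]
  abel

theorem glMul_eq_comp_add (A B : V →ₗ[K] W) :
    glMul φ A B = A ∘ₗ ((1 : Module.End K V) + φ ∘ₗ B) + B := by
  simp only [glMul, comp_add, Module.End.one_eq_id, comp_id]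
  abel

theorem glMul_assoc (A B C : V →ₗ[K] W) :
    glMul φ (glMul φ A B) C = glMul φ A (glMul φ B C) := by
  simp only [glMul, comp_add, add_comp, comp_assoc]
  abel

theorem glMul_zero (A : V →ₗ[K] W) : glMul φ A 0 = A := by
  simp [glMul]

theorem zero_glMul (A : V →ₗ[K] W) : glMul φ 0 A = A := by
  simp [glMul]

theorem one_add_glMul_comp (A B : V →ₗ[K] W) :
    (1 : Module.End K W) + glMul φ A B ∘ₗ φ = (1 + A ∘ₗ φ) * (1 + B ∘ₗ φ) := by
  simp only [glMul, Module.End.mul_eq_comp, comp_add, add_comp, comp_assoc, Module.End.one_eq_id,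
    id_comp, comp_id]
  abel

theorem one_add_comp_glMul (A B : V →ₗ[K] W) :
    (1 : Module.End K V) + φ ∘ₗ glMul φ A B = (1 + φ ∘ₗ A) * (1 + φ ∘ₗ B) := by
  simp only [glMul, Module.End.mul_eq_comp, comp_add, add_comp, comp_assoc, Module.End.one_eq_id,
    id_comp, comp_id]
  abel

theorem glOne1Mem_zero : glOne1Mem φ (0 : V →ₗ[K] W) := by
  simp [glOne1Mem]

theorem glOne1Mem_glMul (hA : glOne1Mem φ A) (hB : glOne1Mem φ B) :
    glOne1Mem φ (glMul φ A B) :=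
  ⟨one_add_glMul_comp φ A B ▸ hA.1.mul hB.1, one_add_comp_glMul φ A B ▸ hA.2.mul hB.2⟩

theorem glOne1Mem_of_glMul_eq_zero (hAB : glMul φ A B = 0) (hBA : glMul φ B A = 0) :
    glOne1Mem φ B := by
  refine ⟨⟨⟨_, 1 + A ∘ₗ φ, ?_, ?_⟩, rfl⟩, ⟨⟨_, 1 + φ ∘ₗ A, ?_, ?_⟩, rfl⟩⟩
  · rw [← one_add_glMul_comp, hBA, zero_comp, add_zero]
  · rw [← one_add_glMul_comp, hAB, zero_comp, add_zero]
  · rw [← one_add_comp_glMul, hBA, comp_zero, add_zero]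
  · rw [← one_add_comp_glMul, hAB, comp_zero, add_zero]

theorem one_add_comp_comp_eq_comp_one_add_comp (A : V →ₗ[K] W) :
    ((1 : Module.End K W) + A ∘ₗ φ) ∘ₗ A = A ∘ₗ ((1 : Module.End K V) + φ ∘ₗ A) := by
  simp only [add_comp, comp_add, Module.End.one_eq_id, id_comp, comp_id, comp_assoc]

theorem glInv_eq_neg_ringInverse_comp (hA : glOne1Mem φ A) :
    glInv φ A = -(Ring.inverse ((1 : Module.End K W) + A ∘ₗ φ) ∘ₗ A) := by
  rw [glInv, comp_ringInverse_eq_ringInverse_comp hA.2 hA.1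
    (one_add_comp_comp_eq_comp_one_add_comp φ A)]

theorem glMul_glInv (hA : glOne1Mem φ A) : glMul φ A (glInv φ A) = 0 := by
  rw [glMul_eq_add_comp, glInv_eq_neg_ringInverse_comp φ hA, comp_neg, ← comp_assoc,
    ← Module.End.mul_eq_comp, Ring.mul_inverse_cancel _ hA.1, Module.End.one_eq_id, id_comp,
    add_neg_cancel]

theorem glInv_glMul (hA : glOne1Mem φ A) : glMul φ (glInv φ A) A = 0 := by
  rw [glMul_eq_comp_add, glInv, neg_comp, comp_assoc, ← Module.End.mul_eq_comp,
    Ring.inverse_mul_cancel _ hA.2, Module.End.one_eq_id, comp_id, neg_add_cancel]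

end GLOne

/-- `(GL(φ)₁, ⊙)` is a group with identity `0`, and the inverse of `A` is
`−A∘(I+φ∘A)⁻¹ = −(I+A∘φ)⁻¹∘A`. -/
theorem gl_phi_one_group (φ : W →ₗ[K] V) :
    glOne1Mem φ (0 : V →ₗ[K] W) ∧
    (∀ A B : V →ₗ[K] W, glOne1Mem φ A → glOne1Mem φ B → glOne1Mem φ (glMul φ A B)) ∧
    (∀ A B C : V →ₗ[K] W, glMul φ (glMul φ A B) C = glMul φ A (glMul φ B C)) ∧
    (∀ A : V →ₗ[K] W, glMul φ A 0 = A ∧ glMul φ 0 A = A) ∧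
    (∀ A : V →ₗ[K] W, glOne1Mem φ A →
      glOne1Mem φ (glInv φ A) ∧
      glMul φ A (glInv φ A) = 0 ∧ glMul φ (glInv φ A) A = 0 ∧
      glInv φ A = -((Ring.inverse ((1 : Module.End K W) + A ∘ₗ φ)) ∘ₗ A)) := by
  refine ⟨glOne1Mem_zero φ, fun _ _ hA hB => glOne1Mem_glMul φ hA hB, glMul_assoc φ,
    fun A => ⟨glMul_zero φ A, zero_glMul φ A⟩, fun A hA => ?_⟩
  have right_inv := glMul_glInv φ hA
  have left_inv := glInv_glMul φ hA
  exact ⟨glOne1Mem_of_glMul_eq_zero φ right_inv left_inv, right_inv, left_inv,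
    glInv_eq_neg_ringInverse_comp φ hA⟩
end

section
/- Let GL(φ)₀ = {(F,f) ∈ GL(W) × GL(V) : φ∘F = f∘φ} act on GL(φ)₁ by A^{(F,f)} := F⁻¹∘A∘f. Then this is a right group action by automorphisms of the group (GL(φ)₁, ⊙), where A₁ ⊙ A₂ = A₁ + A₂ + A₁∘φ∘A₂. -/
open LinearMap
variable {K W V : Type} [Field K] [AddCommGroup W] [AddCommGroup V]
  [Module K W] [Module K V]

/-- The right action `A^{(F,f)} = F⁻¹ ∘ A ∘ f`. -/
def glAct (A : V →ₗ[K] W) (F : (Module.End K W)ˣ) (f : (Module.End K V)ˣ) :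
    V →ₗ[K] W :=
  ((F⁻¹ : (Module.End K W)ˣ) : Module.End K W) ∘ₗ A ∘ₗ ((f : (Module.End K V)ˣ) : Module.End K V)

lemma unit_inv_apply_apply {M : Type} [AddCommGroup M] [Module K M]
    (F : (Module.End K M)ˣ) (w : M) :
    ((F⁻¹ : (Module.End K M)ˣ) : Module.End K M) ((F : Module.End K M) w) = w := by
  rw [← Module.End.mul_apply, F.inv_mul]; rfl

lemma unit_apply_inv_apply {M : Type} [AddCommGroup M] [Module K M]
    (F : (Module.End K M)ˣ) (w : M) :
    (F : Module.End K M) (((F⁻¹ : (Module.End K M)ˣ) : Module.End K M) w) = w := by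
  rw [← Module.End.mul_apply, F.mul_inv]; rfl

lemma conj_isUnit {M : Type} [Ring M] (F : Mˣ) {X : M} (hX : IsUnit X) :
    IsUnit ((F⁻¹ : Mˣ) * X * F) := (F⁻¹.isUnit.mul hX).mul F.isUnit

/-- `GL(φ)₀` acts on the right on `(GL(φ)₁, ⊙)` by group automorphisms. -/
theorem glAct_right_action_by_automorphisms (φ : W →ₗ[K] V) :
    (∀ (A : V →ₗ[K] W) (F : (Module.End K W)ˣ) (f : (Module.End K V)ˣ),
      φ ∘ₗ (F : Module.End K W) = (f : Module.End K V) ∘ₗ φ →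
      glOne1Mem φ A → glOne1Mem φ (glAct A F f)) ∧
    (∀ A : V →ₗ[K] W, glAct A 1 1 = A) ∧
    (∀ (A : V →ₗ[K] W) (F F' : (Module.End K W)ˣ) (f f' : (Module.End K V)ˣ),
      φ ∘ₗ (F : Module.End K W) = (f : Module.End K V) ∘ₗ φ →
      φ ∘ₗ (F' : Module.End K W) = (f' : Module.End K V) ∘ₗ φ →
      glAct (glAct A F f) F' f' = glAct A (F * F') (f * f')) ∧
    (∀ (A₁ A₂ : V →ₗ[K] W) (F : (Module.End K W)ˣ) (f : (Module.End K V)ˣ),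
      φ ∘ₗ (F : Module.End K W) = (f : Module.End K V) ∘ₗ φ →
      glAct (glMul φ A₁ A₂) F f = glMul φ (glAct A₁ F f) (glAct A₂ F f)) := by
  refine ⟨?_, ?_, ?_, ?_⟩
  · intro A F f h hA
    have hpt : ∀ w, φ ((F : Module.End K W) w) = (f : Module.End K V) (φ w) :=
      fun w => congrFun (congrArg DFunLike.coe h) w
    constructor
    · have key : (1 : Module.End K W) + glAct A F f ∘ₗ φ =
          (F⁻¹ : (Module.End K W)ˣ) * ((1 : Module.End K W) + A ∘ₗ φ) * F := by
        ext w
        simp [glAct, Module.End.mul_apply, hpt w, unit_inv_apply_apply]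
      rw [key]
      exact conj_isUnit F hA.1
    · have key : (1 : Module.End K V) + φ ∘ₗ glAct A F f =
          (f⁻¹ : (Module.End K V)ˣ) * ((1 : Module.End K V) + φ ∘ₗ A) * f := by
        have hpt' : ∀ w, φ (((F⁻¹ : (Module.End K W)ˣ) : Module.End K W) w) =
            ((f⁻¹ : (Module.End K V)ˣ) : Module.End K V) (φ w) := by
          intro w
          have := hpt (((F⁻¹ : (Module.End K W)ˣ) : Module.End K W) w)
          rw [unit_apply_inv_apply] at this
          rw [this, unit_inv_apply_apply]
        ext v
        simp [glAct, Module.End.mul_apply, hpt' (A ((f : Module.End K V) v)), unit_inv_apply_apply]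
      rw [key]
      exact conj_isUnit f hA.2
  · intro A; ext v; simp [glAct]
  · intro A F F' f f' _ _; ext v; simp [glAct, Module.End.mul_apply]
  · intro A₁ A₂ F f h
    have hpt : ∀ w, φ ((F : Module.End K W) w) = (f : Module.End K V) (φ w) :=
      fun w => congrFun (congrArg DFunLike.coe h) w
    ext v
    simp only [glAct, glMul, LinearMap.add_apply, LinearMap.comp_apply, map_add]
    rw [← hpt (((F⁻¹ : (Module.End K W)ˣ) : Module.End K W) (A₂ ((f : Module.End K V) v))),
      unit_apply_inv_apply]
end

section
/- For m < n in {0,...,p} and 0 < k < p+1, the symmetric group S_{p+1} (acting on {0,...,p}) contains disjoint subsets S(k−1 ↦ m,n) := {σ : σ(k−1)=m, σ(k)=n} and S(k−1 ↦ n,m) := {σ : σ(k−1)=n, σ(k)=m}, each in bijection with S_{p−1}, and for σ in S(k−1 ↦ m,n) factored as σ = σ″ ∘ σ^{k−1}_{m,n}, the sign satisfies sgn(σ) = (−1)^{m+n+2k−1} · sgn(σ″) where σ″ is the induced permutation of the remaining p−1 letters. -/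
/-!
A permutation `σ` with `σ (k-1) = m` and `σ k = n` factors as `σ = σ″ ∘ π`, where
`π = σ^{k-1}_{m,n}` sends the two positions to `m` and `n` and is monotone elsewhere, so
`sgn σ = sgn π · sgn σ″`. The permutation `π` is a composite of two one-point moves `t ↦ x`
that are monotone elsewhere; each is `(cycleRange x)⁻¹ * cycleRange t`, of sign `(-1)^(t+x)`,
whence `sgn π = (-1)^((k+1)+n+k+m)`. Left multiplication by `π` (or by `swap m n * π`) also
identifies each of the two sets with the pointwise stabiliser of the two positions, i.e. with
the permutations of the remaining `p` letters.
-/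

open Equiv

namespace Fin

variable {q : ℕ}

def succAbovePerm (t x : Fin (q + 1)) : Perm (Fin (q + 1)) :=
  (cycleRange x)⁻¹ * cycleRange t

@[simp]
theorem succAbovePerm_apply_self (t x : Fin (q + 1)) : succAbovePerm t x t = x := by
  rw [succAbovePerm, Perm.mul_apply, cycleRange_self, Perm.inv_eq_iff_eq, cycleRange_self]

@[simp]
theorem succAbovePerm_apply_succAbove (t x : Fin (q + 1)) (j : Fin q) :
    succAbovePerm t x (t.succAbove j) = x.succAbove j := by
  rw [succAbovePerm, Perm.mul_apply, cycleRange_succAbove, Perm.inv_eq_iff_eq,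
    cycleRange_succAbove]

theorem sign_succAbovePerm (t x : Fin (q + 1)) :
    Perm.sign (succAbovePerm t x) = (-1) ^ ((t : ℕ) + x) := by
  simp [succAbovePerm, pow_add, mul_comm]

def succAbovePerm₂ (t x : Fin (q + 2)) (s y : Fin (q + 1)) : Perm (Fin (q + 2)) :=
  succAbovePerm t x * (succAbovePerm s y).viaFintypeEmbedding (succAboveEmb t)

theorem succAbovePerm₂_apply_self (t x : Fin (q + 2)) (s y : Fin (q + 1)) :
    succAbovePerm₂ t x s y t = x := by
  rw [succAbovePerm₂, Perm.mul_apply, Perm.viaFintypeEmbedding_apply_notMem_range _ _ (by simp),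
    succAbovePerm_apply_self]

theorem succAbovePerm₂_apply_succAbove (t x : Fin (q + 2)) (s y : Fin (q + 1))
    (j : Fin (q + 1)) :
    succAbovePerm₂ t x s y (t.succAbove j) = x.succAbove (succAbovePerm s y j) := by
  rw [succAbovePerm₂, Perm.mul_apply, ← succAboveEmb_apply, Perm.viaFintypeEmbedding_apply_image,
    succAboveEmb_apply, succAbovePerm_apply_succAbove]

theorem sign_succAbovePerm₂ (t x : Fin (q + 2)) (s y : Fin (q + 1)) :
    Perm.sign (succAbovePerm₂ t x s y) = (-1) ^ ((t : ℕ) + x + s + y) := by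
  rw [succAbovePerm₂, Perm.sign_mul, Perm.viaFintypeEmbedding_sign, sign_succAbovePerm,
    sign_succAbovePerm, ← pow_add, add_assoc (_ + _)]

theorem range_succAboveOrderEmb_trans (t : Fin (q + 2)) (s : Fin (q + 1)) :
    Set.range (s.succAboveOrderEmb.trans t.succAboveOrderEmb) = {t.succAbove s, t}ᶜ := by
  ext z
  simp only [Set.mem_range, RelEmbedding.coe_trans, Function.comp_apply,
    succAboveOrderEmb_apply, Set.mem_compl_iff, Set.mem_insert_iff, Set.mem_singleton_iff, not_or]
  constructor
  · rintro ⟨j, rfl⟩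
    exact ⟨fun h => s.succAbove_ne j (succAbove_right_injective h), t.succAbove_ne _⟩
  · rintro ⟨hzs, hzt⟩
    obtain ⟨y, rfl⟩ := exists_succAbove_eq hzt
    obtain ⟨j, rfl⟩ := exists_succAbove_eq fun h : y = s => hzs (h ▸ rfl)
    exact ⟨j, rfl⟩

theorem succAbovePerm₂_apply_of_range_eq {t x : Fin (q + 2)} {s y : Fin (q + 1)}
    {d c : Fin q ↪o Fin (q + 2)} (hd : Set.range d = {t.succAbove s, t}ᶜ)
    (hc : Set.range c = {x.succAbove y, x}ᶜ) (j : Fin q) :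
    succAbovePerm₂ t x s y (d j) = c j := by
  have hd' : ⇑d = ⇑(s.succAboveOrderEmb.trans t.succAboveOrderEmb) :=
    (d.strictMono.range_inj (OrderEmbedding.strictMono _)).mp
      (by rw [hd, range_succAboveOrderEmb_trans])
  have hc' : ⇑c = ⇑(y.succAboveOrderEmb.trans x.succAboveOrderEmb) :=
    (c.strictMono.range_inj (OrderEmbedding.strictMono _)).mp
      (by rw [hc, range_succAboveOrderEmb_trans])
  simp [hd', hc', succAbovePerm₂_apply_succAbove]

end Fin

namespace Equiv.Perm

variable {α β : Type*} [Fintype α] [DecidableEq α]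

theorem nonempty_setOf_apply_eq_equiv_perm_fin {a b x y : α} (hab : a ≠ b) (π : Perm α)
    (ha : π a = x) (hb : π b = y) :
    Nonempty ({σ : Perm α | σ a = x ∧ σ b = y} ≃ Perm (Fin (Fintype.card α - 2))) := by
  let s : Finset α := {a, b}
  have coset : {σ : Perm α | σ a = x ∧ σ b = y} ≃ {σ : Perm α // ∀ z, ¬ z ∉ s → σ z = z} :=
    (Equiv.mulLeft π⁻¹).subtypeEquiv fun σ => by
      simp only [Set.mem_ofPred_eq, not_not, s, Finset.mem_insert, Finset.mem_singleton,
        forall_eq_or_imp, forall_eq, coe_mulLeft, Perm.mul_apply, Perm.inv_eq_iff_eq, ha, hb]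
  have hcard : Fintype.card {z // z ∉ s} = Fintype.card α - 2 := by
    rw [Fintype.card_subtype_compl, Fintype.card_coe, Finset.card_pair hab]
  exact ⟨coset.trans <| (Perm.subtypeEquivSubtypePerm _).symm.trans
    (Fintype.equivFinOfCardEq hcard).permCongr⟩

theorem sign_eq_sign_mul_sign_of_apply_embedding [Fintype β] [DecidableEq β]
    {σ π : Perm α} {σ'' : Perm β} {d c : β ↪ α} (hπ : ∀ j, π (d j) = c j)
    (hσ : ∀ j, σ (d j) = c (σ'' j)) (hσπ : ∀ z ∉ Set.range d, σ z = π z) :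
    sign σ = sign π * sign σ'' := by
  have hfactor : σ = σ''.viaFintypeEmbedding c * π := by
    ext w
    rw [Perm.mul_apply]
    by_cases hw : w ∈ Set.range d
    · obtain ⟨j, rfl⟩ := hw
      rw [hσ, hπ, viaFintypeEmbedding_apply_image]
    · rw [hσπ w hw, viaFintypeEmbedding_apply_notMem_range]
      rintro ⟨j, hj⟩
      exact hw ⟨j, π.injective (by rw [hπ, hj])⟩
  rw [hfactor, sign_mul, viaFintypeEmbedding_sign, mul_comm]

end Equiv.Perm

/-- The paper's positions `k-1, k` are `k.castSucc, k.succ`, so its `k` is `k.val + 1`. -/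
theorem consecutive_value_subsets_sign (p : ℕ) (k : Fin (p + 1))
    (m n : Fin (p + 2)) (hmn : m < n) :
    let S1 : Set (Equiv.Perm (Fin (p + 2))) := {σ | σ k.castSucc = m ∧ σ k.succ = n}
    let S2 : Set (Equiv.Perm (Fin (p + 2))) := {σ | σ k.castSucc = n ∧ σ k.succ = m}
    Disjoint S1 S2 ∧
    Nonempty (S1 ≃ Equiv.Perm (Fin p)) ∧
    Nonempty (S2 ≃ Equiv.Perm (Fin p)) ∧
    (∀ σ ∈ S1, ∀ d c : Fin p ↪o Fin (p + 2),
      Set.range ⇑d = ({k.castSucc, k.succ} : Set (Fin (p + 2)))ᶜ →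
      Set.range ⇑c = ({m, n} : Set (Fin (p + 2)))ᶜ →
      ∀ σ'' : Equiv.Perm (Fin p), (∀ j, σ (d j) = c (σ'' j)) →
        Equiv.Perm.sign σ =
          (-1 : ℤˣ) ^ ((m : ℕ) + (n : ℕ) + 2 * (k : ℕ) + 1) * Equiv.Perm.sign σ'') := by
  intro S1 S2
  set m' := m.castPred (Fin.ne_last_of_lt hmn)
  have hnm : n.succAbove m' = m := Fin.succAbove_castPred_of_lt n m hmn
  -- the paper's `σ^{k-1}_{m,n}`
  let π := Fin.succAbovePerm₂ k.succ n k m'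
  have hπk : π k.castSucc = m := by
    rw [← Fin.succAbove_succ_self, Fin.succAbovePerm₂_apply_succAbove,
      Fin.succAbovePerm_apply_self, hnm]
  have hπk' : π k.succ = n := Fin.succAbovePerm₂_apply_self _ _ _ _
  have hk : k.castSucc ≠ k.succ := Fin.castSucc_lt_succ.ne
  refine ⟨Set.disjoint_left.mpr fun σ h1 h2 => hmn.ne (h1.1.symm.trans h2.1), ?_, ?_, ?_⟩
  · simpa using Perm.nonempty_setOf_apply_eq_equiv_perm_fin hk π hπk hπk'
  · simpa using Perm.nonempty_setOf_apply_eq_equiv_perm_fin hk (swap m n * π)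
      (by rw [Perm.mul_apply, hπk, swap_apply_left])
      (by rw [Perm.mul_apply, hπk', swap_apply_right])
  rintro σ ⟨hσk, hσk'⟩ d c hd hc σ'' hσ
  have hπ : ∀ j, π (d j) = c j := Fin.succAbovePerm₂_apply_of_range_eq
    (by rw [hd, Fin.succAbove_succ_self, Set.pair_comm]) (by rw [hc, hnm])
  have hσπ : ∀ z ∉ Set.range d, σ z = π z := by
    intro z hz
    rw [hd, Set.notMem_compl_iff] at hz
    rcases hz with rfl | rfl
    · rw [hσk, hπk]
    · rw [hσk', hπk']
  rw [Perm.sign_eq_sign_mul_sign_of_apply_embedding hπ hσ hσπ, Fin.sign_succAbovePerm₂]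
  congr 2
  simp only [Fin.val_succ, m', Fin.coe_castPred]
  ring
end

section
/- Let g₁ be a Lie algebra with a Lie subalgebra decomposition given by a surjective Lie algebra homomorphism ŝ : g₁ → h with splitting û : h → g₁, and set g := ker ŝ with μ := t̂|_g for a second homomorphism t̂ : g₁ → h satisfying t̂∘û = id. Define L_y x := [û(y), x] for y ∈ h, x ∈ g. If additionally (g₁, h, ŝ, t̂, û) is a Lie 2-algebra (i.e., the groupoid structure maps are Lie algebra morphisms), then (g, h, μ, L) is a crossed module of Lie algebras: L is an action by derivations, μ(L_y x) = [y, μ(x)], and L_{μ(x₀)}x₁ = [x₀, x₁]. -/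
/-- A Lie 2-algebra (a groupoid internal to Lie algebras with source `s`,
target `t`, unit `u` and Lie-morphism composition
`m(a,b) = a + b − u(t b)` on composable pairs) gives rise to a crossed module
`(g = ker s, h, μ = t|_g, L_y x = [u y, x])` of Lie algebras. -/
theorem lie2algebra_to_crossed_module {K g₁ h : Type} [Field K]
    [LieRing g₁] [LieAlgebra K g₁] [LieRing h] [LieAlgebra K h]
    (s t : g₁ →ₗ⁅K⁆ h) (u : h →ₗ⁅K⁆ g₁)
    (hs : Function.Surjective s)
    (hsu : ∀ y : h, s (u y) = y) (htu : ∀ y : h, t (u y) = y)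
    (hm : ∀ a b a' b' : g₁, s a = t b → s a' = t b' →
      ⁅a + b - u (t b), a' + b' - u (t b')⁆ =
        ⁅a, a'⁆ + ⁅b, b'⁆ - u (t ⁅b, b'⁆)) :
    -- the action preserves g = ker s
    (∀ (y : h) (x : g₁), s x = 0 → s ⁅u y, x⁆ = 0) ∧
    -- L is a Lie algebra action : L_{[y₀,y₁]} = L_{y₀}∘L_{y₁} − L_{y₁}∘L_{y₀}
    (∀ (y₀ y₁ : h) (x : g₁), s x = 0 →
      ⁅u ⁅y₀, y₁⁆, x⁆ = ⁅u y₀, ⁅u y₁, x⁆⁆ - ⁅u y₁, ⁅u y₀, x⁆⁆) ∧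
    -- L acts by derivations
    (∀ (y : h) (x₀ x₁ : g₁), s x₀ = 0 → s x₁ = 0 →
      ⁅u y, ⁅x₀, x₁⁆⁆ = ⁅⁅u y, x₀⁆, x₁⁆ + ⁅x₀, ⁅u y, x₁⁆⁆) ∧
    -- equivariance : μ(L_y x) = [y, μ(x)]
    (∀ (y : h) (x : g₁), s x = 0 → t ⁅u y, x⁆ = ⁅y, t x⁆) ∧
    -- infinitesimal Peiffer : L_{μ(x₀)} x₁ = [x₀, x₁]
    (∀ x₀ x₁ : g₁, s x₀ = 0 → s x₁ = 0 → ⁅u (t x₀), x₁⁆ = ⁅x₀, x₁⁆) := by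
  have key : ∀ p q : g₁, s p = 0 → t q = 0 → ⁅p, q⁆ = 0 := by
    intro p q hp hq
    have := hm p 0 0 q (by simp [hp]) (by simp [hq])
    simpa [hq] using this
  refine ⟨?_, ?_, ?_, ?_, ?_⟩
  · intro y x hx
    simp [hsu, hx]
  · intro y₀ y₁ x _
    rw [LieHom.map_lie, lie_lie]
  · intro y x₀ x₁ _ _
    rw [leibniz_lie]
  · intro y x _
    simp [htu]
  · intro x₀ x₁ h0 h1
    have : ⁅u (t x₀) - x₀, x₁⁆ = 0 := by
      rw [← lie_skew, key x₁ _ h1 (by simp [htu]), neg_zero]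
    have e := sub_lie (u (t x₀)) x₀ x₁
    rw [this] at e
    exact sub_eq_zero.mp e.symm
end

section
/- Let g ⊕ h carry the bracket [(x₀,y₀),(x₁,y₁)] = ([x₀,x₁] + L_{y₀}x₁ − L_{y₁}x₀, [y₀,y₁]) of a semi-direct sum coming from a crossed module μ : g → h, and define ŝ(x,y) = y, t̂(x,y) = y + μ(x), û(y) = (0,y), and composition (x', y+μ(x)) ∘ (x,y) = (x+x', y). Then ŝ, t̂, û are Lie algebra homomorphisms, and composition is a Lie algebra morphism from the fibered product {((x',y'),(x,y)) : y' = y + μ(x)} ⊆ (g⊕h) × (g⊕h) to g ⊕ h. -/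
section CrossedModule

variable {K g h : Type*} [CommRing K] [LieRing g] [LieAlgebra K g] [LieRing h] [LieAlgebra K h]
  (L : h →ₗ[K] Module.End K g) (μ : g →ₗ⁅K⁆ h)

def semidirectBracket (p q : g × h) : g × h :=
  (⁅p.1, q.1⁆ + L p.2 q.1 - L q.2 p.1, ⁅p.2, q.2⁆)

def crossedModuleTarget (p : g × h) : h := p.2 + μ p.1

variable {L μ}

theorem crossedModuleTarget_semidirectBracket (heq : ∀ (y : h) (x : g), μ (L y x) = ⁅y, μ x⁆)
    (p q : g × h) :
    crossedModuleTarget μ (semidirectBracket L p q) =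
      ⁅crossedModuleTarget μ p, crossedModuleTarget μ q⁆ := by
  simp only [crossedModuleTarget, semidirectBracket, map_add, map_sub, LieHom.map_lie, heq,
    lie_add, add_lie, ← lie_skew (μ p.1) q.2]
  abel

/-- The Peiffer identity turns the cross terms `L (μ x) x'` into the brackets `⁅x, x'⁆` that
expanding `⁅x + x', x₁ + x₁'⁆` produces. -/
theorem semidirectBracket_fst_add_of_composable (hpeif : ∀ x₀ x₁ : g, L (μ x₀) x₁ = ⁅x₀, x₁⁆)
    {p' p q' q : g × h} (hp : p'.2 = crossedModuleTarget μ p)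
    (hq : q'.2 = crossedModuleTarget μ q) :
    (semidirectBracket L p q).1 + (semidirectBracket L p' q').1 =
      (semidirectBracket L (p.1 + p'.1, p.2) (q.1 + q'.1, q.2)).1 := by
  simp only [semidirectBracket, crossedModuleTarget] at hp hq ⊢
  simp only [hp, hq, map_add, LinearMap.add_apply, hpeif, lie_add, add_lie,
    ← lie_skew q.1 p'.1]
  abel

end CrossedModule

theorem crossed_module_to_lie2algebra_general {K g h : Type} [Field K]
    [LieRing g] [LieAlgebra K g] [LieRing h] [LieAlgebra K h]
    (L : h →ₗ[K] Module.End K g)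
    (μ : g →ₗ⁅K⁆ h)
    (heq : ∀ (y : h) (x : g), μ (L y x) = ⁅y, μ x⁆)
    (hpeif : ∀ x₀ x₁ : g, L (μ x₀) x₁ = ⁅x₀, x₁⁆) :
    let br : g × h → g × h → g × h := fun p q =>
      (⁅p.1, q.1⁆ + L p.2 q.1 - L q.2 p.1, ⁅p.2, q.2⁆)
    let s : g × h → h := fun p => p.2
    let t : g × h → h := fun p => p.2 + μ p.1
    let u : h → g × h := fun y => (0, y)
    let m : g × h → g × h → g × h := fun p' p => (p.1 + p'.1, p.2)
    -- s is a Lie algebra homomorphism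
    (∀ p q : g × h, s (p + q) = s p + s q) ∧
    (∀ (c : K) (p : g × h), s (c • p) = c • s p) ∧
    (∀ p q : g × h, s (br p q) = ⁅s p, s q⁆) ∧
    -- t is a Lie algebra homomorphism
    (∀ p q : g × h, t (p + q) = t p + t q) ∧
    (∀ (c : K) (p : g × h), t (c • p) = c • t p) ∧
    (∀ p q : g × h, t (br p q) = ⁅t p, t q⁆) ∧
    -- u is a Lie algebra homomorphism
    (∀ y₀ y₁ : h, u (y₀ + y₁) = u y₀ + u y₁) ∧
    (∀ (c : K) (y : h), u (c • y) = c • u y) ∧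
    (∀ y₀ y₁ : h, br (u y₀) (u y₁) = u ⁅y₀, y₁⁆) ∧
    -- the composition is a Lie algebra morphism on the fibered product
    (∀ p' p q' q : g × h, s p' = t p → s q' = t q →
      m (p' + q') (p + q) = m p' p + m q' q) ∧
    (∀ (c : K) (p' p : g × h), m (c • p') (c • p) = c • m p' p) ∧
    (∀ p' p q' q : g × h, s p' = t p → s q' = t q →
      s (br p' q') = t (br p q) ∧
      m (br p' q') (br p q) = br (m p' p) (m q' q)) := by
  intro br s t u m
  have target_bracket : ∀ p q, t (br p q) = ⁅t p, t q⁆ :=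
    crossedModuleTarget_semidirectBracket heq
  refine ⟨fun _ _ => rfl, fun _ _ => rfl, fun _ _ => rfl, ?_, ?_, target_bracket,
    fun _ _ => Prod.ext (add_zero 0).symm rfl, fun c _ => Prod.ext (smul_zero c).symm rfl,
    fun _ _ => ?_, fun _ _ _ _ _ _ => Prod.ext (add_add_add_comm _ _ _ _) rfl,
    fun c _ _ => Prod.ext (smul_add c _ _).symm rfl, fun p' p q' q hp hq => ?_⟩
  · intro p q
    simp only [t, Prod.fst_add, Prod.snd_add, map_add]
    abel
  · intro c p
    simp only [t, Prod.smul_fst, Prod.smul_snd, map_smul, smul_add]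
  · simp [br, u]
  · refine ⟨?_, Prod.ext (semidirectBracket_fst_add_of_composable hpeif hp hq) rfl⟩
    change ⁅s p', s q'⁆ = t (br p q)
    rw [hp, hq, target_bracket]

/-- The Lie 2-algebra associated to a crossed module `μ : g → h` of Lie
algebras: on `g ⊕ h` with the semi-direct sum bracket, the structural maps
`s(x,y) = y`, `t(x,y) = y + μ(x)`, `u(y) = (0,y)` are Lie algebra
homomorphisms and the composition `(x', y+μ(x)) ∘ (x,y) = (x+x', y)` is a Lie
algebra morphism from the fibered product. -/
theorem crossed_module_to_lie2algebra {K g h : Type} [Field K]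
    [LieRing g] [LieAlgebra K g] [LieRing h] [LieAlgebra K h]
    (L : h →ₗ[K] Module.End K g)
    (hL_act : ∀ y₀ y₁ : h, L ⁅y₀, y₁⁆ = L y₀ * L y₁ - L y₁ * L y₀)
    (hL_der : ∀ (y : h) (x₀ x₁ : g), L y ⁅x₀, x₁⁆ = ⁅L y x₀, x₁⁆ + ⁅x₀, L y x₁⁆)
    (μ : g →ₗ⁅K⁆ h)
    (heq : ∀ (y : h) (x : g), μ (L y x) = ⁅y, μ x⁆)
    (hpeif : ∀ x₀ x₁ : g, L (μ x₀) x₁ = ⁅x₀, x₁⁆) :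
    let br : g × h → g × h → g × h := fun p q =>
      (⁅p.1, q.1⁆ + L p.2 q.1 - L q.2 p.1, ⁅p.2, q.2⁆)
    let s : g × h → h := fun p => p.2
    let t : g × h → h := fun p => p.2 + μ p.1
    let u : h → g × h := fun y => (0, y)
    let m : g × h → g × h → g × h := fun p' p => (p.1 + p'.1, p.2)
    -- s is a Lie algebra homomorphism
    (∀ p q : g × h, s (p + q) = s p + s q) ∧
    (∀ (c : K) (p : g × h), s (c • p) = c • s p) ∧
    (∀ p q : g × h, s (br p q) = ⁅s p, s q⁆) ∧
    -- t is a Lie algebra homomorphism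
    (∀ p q : g × h, t (p + q) = t p + t q) ∧
    (∀ (c : K) (p : g × h), t (c • p) = c • t p) ∧
    (∀ p q : g × h, t (br p q) = ⁅t p, t q⁆) ∧
    -- u is a Lie algebra homomorphism
    (∀ y₀ y₁ : h, u (y₀ + y₁) = u y₀ + u y₁) ∧
    (∀ (c : K) (y : h), u (c • y) = c • u y) ∧
    (∀ y₀ y₁ : h, br (u y₀) (u y₁) = u ⁅y₀, y₁⁆) ∧
    -- the composition is a Lie algebra morphism on the fibered product
    (∀ p' p q' q : g × h, s p' = t p → s q' = t q →
      m (p' + q') (p + q) = m p' p + m q' q) ∧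
    (∀ (c : K) (p' p : g × h), m (c • p') (c • p) = c • m p' p) ∧
    (∀ p' p q' q : g × h, s p' = t p → s q' = t q →
      s (br p' q') = t (br p q) ∧
      m (br p' q') (br p q) = br (m p' p) (m q' q)) :=
  crossed_module_to_lie2algebra_general L μ heq hpeif
end
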